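/- Attaching trees of dimension at most m to the leaves of a tree of dimension at most m yields a tree of dimension at most 2m: if dim(t') ≤ m and dim(tᵢ) ≤ m for all i, then dim(t'[t₁,...,tₙ]) ≤ 2m. -/

import Mathlib

inductive RTree where
  | node : List RTree → RTree

/-- Dimension of a finite rooted tree: a leaf has dimension 0; a node with one
child has the dimension of that child; a node with at least two children has
dimension `d₁ + 1` if the two largest child dimensions `d₁ ≥ d₂` are equal,
and `d₁` otherwise. -/
def RTree.dim : RTree → ℕ
  | .node [] => 0
  | .node [t] => t.dim
  | .node ts =>
      let ds := ts.attach.map fun t => t.1.dim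
      let d1 := ds.foldr max 0
      let d2 := (ds.erase d1).foldr max 0
      if d1 = d2 then d1 + 1 else d1
decreasing_by
  · simp; omega
  · have := List.sizeOf_lt_of_mem t.2; simp at this ⊢; omega

mutual
/-- `Graft t' ts t` holds if `t` is obtained from `t'` by replacing its leaves,
in left-to-right order, by the trees in the list `ts` (i.e. `t = t'[t₁,…,tₙ]`). -/
inductive Graft : RTree → List RTree → RTree → Prop where
  | leaf (t : RTree) : Graft (.node []) [t] t
  | node {cs : List RTree} {ts : List RTree} {cs' : List RTree} :
      cs ≠ [] → GraftList cs ts cs' → Graft (.node cs) ts (.node cs')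

/-- Grafting performed on a list of trees, splitting the supply of attached trees. -/
inductive GraftList : List RTree → List RTree → List RTree → Prop where
  | nil : GraftList [] [] []
  | cons {c c' : RTree} {cs cs' : List RTree} {ts ts' : List RTree} :
      Graft c ts c' → GraftList cs ts' cs' → GraftList (c :: cs) (ts ++ ts') (c' :: cs')
end

/-! Grafting raises the dimension by at most `m`: `dim t'[t₁,…,tₙ] ≤ dim t' + m`, by induction
on `t'`. The inductive step is that a node's dimension grows by at most `m` when each child's
does, which is seen from the threshold description of the dimension of a node with at least two
children: `v < dim` iff some child has dimension `> v` or two children have dimension `≥ v`. -/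

namespace RTree

def largest (l : List ℕ) : ℕ := l.foldr max 0

def secondLargest (l : List ℕ) : ℕ := largest (l.erase (largest l))

def branchDim (l : List ℕ) : ℕ :=
  if largest l = secondLargest l then largest l + 1 else largest l

def nodeDim : List ℕ → ℕ
  | [] => 0
  | [d] => d
  | l@(_ :: _ :: _) => branchDim l

theorem largest_mem {l : List ℕ} (hl : l ≠ []) : largest l ∈ l := by
  induction l with
  | nil => contradiction
  | cons a l ih =>
    rcases eq_or_ne l [] with rfl | hl'
    · simp [largest]
    · change max a (largest l) ∈ a :: l
      rcases max_choice a (largest l) with h | h <;> rw [h]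
      · exact List.mem_cons_self
      · exact List.mem_cons_of_mem _ (ih hl')

theorem le_largest_iff {v : ℕ} {l : List ℕ} :
    v ≤ largest l ↔ v = 0 ∨ 1 ≤ l.countP (v ≤ ·) := by
  induction l with
  | nil => simp [largest]
  | cons a l ih =>
    change v ≤ max a (largest l) ↔ _
    rw [le_max_iff, ih, List.countP_cons]
    by_cases ha : v ≤ a <;> simp [ha]

theorem le_secondLargest_iff {v : ℕ} {l : List ℕ} :
    v ≤ secondLargest l ↔ v = 0 ∨ 2 ≤ l.countP (v ≤ ·) := by
  rw [secondLargest, le_largest_iff, List.countP_erase]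
  rcases Nat.eq_zero_or_pos v with rfl | hv
  · simp
  by_cases hc : 1 ≤ l.countP (v ≤ ·)
  · have hmem : largest l ∈ l := largest_mem (by rintro rfl; simp at hc)
    have hle : v ≤ largest l := le_largest_iff.2 (Or.inr hc)
    simp [hmem, hle]
    omega
  · omega

theorem secondLargest_le_largest (l : List ℕ) : secondLargest l ≤ largest l :=
  le_largest_iff.2 ((le_secondLargest_iff.1 le_rfl).imp_right (by omega))

theorem lt_branchDim_iff {v : ℕ} {l : List ℕ} :
    v < branchDim l ↔ v < largest l ∨ v ≤ secondLargest l := by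
  have := secondLargest_le_largest l
  unfold branchDim
  split <;> omega

section Forall₂

variable {m : ℕ} {ds ds' : List ℕ}

theorem countP_le_countP_of_forall₂ (H : List.Forall₂ (fun a b => b ≤ a + m) ds ds') (v : ℕ) :
    ds'.countP (v + m ≤ ·) ≤ ds.countP (v ≤ ·) := by
  induction H with
  | nil => simp
  | cons hab _ ih =>
    simp only [List.countP_cons]
    split <;> split <;> simp_all <;> omega

theorem le_largest_of_forall₂ (H : List.Forall₂ (fun a b => b ≤ a + m) ds ds') {v : ℕ}
    (hv : v + m ≤ largest ds') : v ≤ largest ds := by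
  rw [le_largest_iff] at hv ⊢
  have := countP_le_countP_of_forall₂ H v
  omega

theorem le_secondLargest_of_forall₂ (H : List.Forall₂ (fun a b => b ≤ a + m) ds ds') {v : ℕ}
    (hv : v + m ≤ secondLargest ds') : v ≤ secondLargest ds := by
  rw [le_secondLargest_iff] at hv ⊢
  have := countP_le_countP_of_forall₂ H v
  omega

theorem branchDim_le_of_forall₂ (H : List.Forall₂ (fun a b => b ≤ a + m) ds ds') :
    branchDim ds' ≤ branchDim ds + m := by
  by_contra! hlt
  have hds : branchDim ds < branchDim ds :=
    lt_branchDim_iff.2 <| (lt_branchDim_iff.1 hlt).imp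
      (fun h => le_largest_of_forall₂ H (by omega)) (le_secondLargest_of_forall₂ H)
  exact lt_irrefl _ hds

theorem nodeDim_le_of_forall₂ (H : List.Forall₂ (fun a b => b ≤ a + m) ds ds') :
    nodeDim ds' ≤ nodeDim ds + m := by
  rcases H with _ | ⟨h₁, _ | ⟨h₂, H⟩⟩
  · exact Nat.zero_le _
  · exact h₁
  · exact branchDim_le_of_forall₂ (.cons h₁ (.cons h₂ H))

end Forall₂

theorem dim_node (cs : List RTree) : (node cs).dim = nodeDim (cs.map dim) := by
  match cs with
  | [] => rw [dim]; rfl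
  | [c] => rw [dim]; rfl
  | a :: b :: r =>
    rw [dim]
    · simp only [nodeDim, branchDim, secondLargest, largest, List.attach_map_val]
      rfl
    · simp
    · simp

end RTree

open RTree in
theorem Graft.dim_le_add {m : ℕ} {t' t : RTree} {ts : List RTree} (h : Graft t' ts t)
    (hts : ∀ u ∈ ts, u.dim ≤ m) : t.dim ≤ t'.dim + m := by
  induction h using Graft.rec
    (motive_2 := fun cs ts cs' _ => (∀ u ∈ ts, u.dim ≤ m) →
      List.Forall₂ (fun a b => b ≤ a + m) (cs.map dim) (cs'.map dim)) with
  | leaf t => simpa [dim_node, nodeDim] using hts t (by simp)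
  | node _ _ ih =>
    rw [dim_node, dim_node]
    exact nodeDim_le_of_forall₂ (ih hts)
  | nil => exact .nil
  | cons _ _ ih ih' =>
    rename_i hts
    exact .cons (ih fun u hu => hts u (by simp [hu])) (ih' fun u hu => hts u (by simp [hu]))

/-- Attaching trees of dimension at most `m` to the leaves of a tree of
dimension at most `m` yields a tree of dimension at most `2m`. -/
theorem graft_dim_upper_bound (t' t : RTree) (ts : List RTree) (m : ℕ)
    (h : Graft t' ts t) (h' : t'.dim ≤ m) (hts : ∀ u ∈ ts, u.dim ≤ m) :
    t.dim ≤ 2 * m := by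
  have := h.dim_le_add hts
  omega
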